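/- arXiv:2006.01020 — 2 statements merged into one kernel-verified Lean document; each statement's English description precedes it below -/
import Mathlib

section
/- If B is a bramble in a graph G, E, E' ∈ B, and A ⊆ V(G) satisfies E ⊆ A and E' ⊆ A^c, then the number of edges between A and A^c is at least (order of B) − 1. -/
/-- A finite multigraph on vertex set `V`: `mul u v` is the number of
parallel edges between `u` and `v`; there are no loops. -/
structure Multigraph (V : Type) where
  mul : V → V → ℕ
  symm : ∀ u v, mul u v = mul v u
  loopless : ∀ v, mul v v = 0

namespace Multigraph

variable {V : Type}

/-- Adjacency in a multigraph. -/
def Adj (G : Multigraph V) (u v : V) : Prop := 0 < G.mul u v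

/-- The underlying simple graph of a multigraph. -/
def simple (G : Multigraph V) : SimpleGraph V where
  Adj u v := 0 < G.mul u v
  symm := ⟨fun u v h => by simpa [G.symm u v] using h⟩
  loopless := ⟨fun v h => by simp [G.loopless] at h⟩

/-- A multigraph is connected if its underlying simple graph is. -/
def Connected (G : Multigraph V) : Prop := G.simple.Connected

/-- A (nonempty) connected subset of the vertices of a multigraph. -/
def ConnSubset (G : Multigraph V) (B : Finset V) : Prop :=
  B.Nonempty ∧ (SimpleGraph.induce (B : Set V) G.simple).Connected

variable [Fintype V] [DecidableEq V]

/-- The number of edges between `A` and its complement. -/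
def cut (G : Multigraph V) (A : Finset V) : ℕ :=
  ∑ u ∈ A, ∑ v ∈ Aᶜ, G.mul u v

/-- A scramble: a collection of eggs, each a nonempty connected vertex subset. -/
def IsScramble (G : Multigraph V) (S : Finset (Finset V)) : Prop :=
  ∀ E ∈ S, G.ConnSubset E

/-- A hitting set for a scramble: a set of vertices meeting every egg. -/
def IsHitting (S : Finset (Finset V)) (C : Finset V) : Prop :=
  ∀ E ∈ S, (E ∩ C).Nonempty

/-- `k` is a valid order for the scramble `S` if no hitting set has fewer than `k`
vertices, and every vertex set `A` containing an egg, with an egg in its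
complement, has at least `k` crossing edges. -/
def ValidOrder (G : Multigraph V) (S : Finset (Finset V)) (k : ℕ) : Prop :=
  (∀ C : Finset V, IsHitting S C → k ≤ C.card) ∧
  (∀ A : Finset V, (∃ E ∈ S, E ⊆ A) → (∃ E' ∈ S, E' ⊆ Aᶜ) → k ≤ G.cut A)

/-- The scramble order `‖S‖`: the largest valid order. -/
noncomputable def scrambleOrder (G : Multigraph V) (S : Finset (Finset V)) : ℕ :=
  sSup {k | ValidOrder G S k}

/-- The scramble number of a multigraph: the maximum scramble order of a scramble. -/
noncomputable def scrambleNumber (G : Multigraph V) : ℕ :=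
  sSup {n | ∃ S, IsScramble G S ∧ scrambleOrder G S = n}

end Multigraph

namespace Multigraph

variable {V : Type} [Fintype V] [DecidableEq V]

/-- A bramble: a scramble in which the union of any two eggs is connected. -/
def IsBramble (G : Multigraph V) (S : Finset (Finset V)) : Prop :=
  IsScramble G S ∧ ∀ E ∈ S, ∀ E' ∈ S, G.ConnSubset (E ∪ E')

/-- A strict bramble: a bramble in which any two eggs intersect. -/
def IsStrictBramble (G : Multigraph V) (S : Finset (Finset V)) : Prop :=
  IsBramble G S ∧ ∀ E ∈ S, ∀ E' ∈ S, (E ∩ E').Nonempty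

/-- The order of a bramble: the minimum size of a hitting set. -/
noncomputable def brambleOrder (S : Finset (Finset V)) : ℕ :=
  sInf {n | ∃ C : Finset V, IsHitting S C ∧ C.card = n}

end Multigraph

/-!
Let `X` be the set of adjacent pairs `(a, b)` with `a ∈ A`, `b ∉ A`, so `|X| ≤ cut A`; for an egg
`F` let `N F ⊆ X` be the pairs with `a ∈ F`. Since `F ∪ E'` is connected, `N F` is nonempty for
every egg `F ⊆ A`. Choose an egg `F₀ ⊆ A` with `|N F₀|` minimal and some `j ∈ N F₀`, and take
the `A`-ends of `X \ N F₀`, the `Aᶜ`-ends of `N F₀`, and the `A`-end of `j`: at most `|X| + 1`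
vertices. An egg `F ⊆ A` is hit, because either `N F ⊄ N F₀` or, by minimality, `N F = N F₀ ∋ j`.
An egg `F` meeting `Aᶜ` is hit, because the connected set `F₀ ∪ F` has a crossing pair, whose
`Aᶜ`-end lies in `F` and whose `A`-end lies in `F` unless the pair belongs to `N F₀`.
-/

namespace Multigraph

open Finset

variable {V : Type} [DecidableEq V]

lemma brambleOrder_le_card {S : Finset (Finset V)} {C : Finset V} (hC : IsHitting S C) :
    brambleOrder S ≤ #C :=
  Nat.sInf_le ⟨C, hC, rfl⟩

variable [Fintype V] (G : Multigraph V)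

def crossingPairs (A : Finset V) : Finset (V × V) :=
  {p ∈ A ×ˢ Aᶜ | 0 < G.mul p.1 p.2}

def leavingPairs (A F : Finset V) : Finset (V × V) :=
  {p ∈ G.crossingPairs A | p.1 ∈ F}

variable {G}

@[simp]
lemma mem_crossingPairs {A : Finset V} {p : V × V} :
    p ∈ G.crossingPairs A ↔ (p.1 ∈ A ∧ p.2 ∉ A) ∧ 0 < G.mul p.1 p.2 := by
  simp [crossingPairs]

@[simp]
lemma mem_leavingPairs {A F : Finset V} {p : V × V} :
    p ∈ G.leavingPairs A F ↔ p ∈ G.crossingPairs A ∧ p.1 ∈ F := by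
  simp [leavingPairs]

lemma card_crossingPairs_le_cut (A : Finset V) : #(G.crossingPairs A) ≤ G.cut A :=
  calc #(G.crossingPairs A) = ∑ p ∈ G.crossingPairs A, 1 := card_eq_sum_ones _
    _ ≤ ∑ p ∈ G.crossingPairs A, G.mul p.1 p.2 :=
        sum_le_sum fun p hp => (mem_crossingPairs.mp hp).2
    _ ≤ ∑ p ∈ A ×ˢ Aᶜ, G.mul p.1 p.2 := sum_le_sum_of_subset (filter_subset _ _)
    _ = G.cut A := by rw [cut, sum_product]

lemma exists_crossingPair_of_connected {A W : Finset V}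
    (hW : (SimpleGraph.induce (W : Set V) G.simple).Connected) {a b : V}
    (haW : a ∈ W) (hbW : b ∈ W) (haA : a ∈ A) (hbA : b ∉ A) :
    ∃ p ∈ G.crossingPairs A, p.1 ∈ W ∧ p.2 ∈ W := by
  obtain ⟨w⟩ := hW.preconnected ⟨a, haW⟩ ⟨b, hbW⟩
  obtain ⟨d, -, hd₁, hd₂⟩ := w.exists_boundary_dart {x | (x : V) ∈ A} haA hbA
  exact ⟨(d.toProd.1, d.toProd.2), mem_crossingPairs.mpr ⟨⟨hd₁, hd₂⟩, d.adj⟩,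
    d.toProd.1.2, d.toProd.2.2⟩

lemma leavingPairs_nonempty {S : Finset (Finset V)} (hS : IsBramble G S) {A F E' : Finset V}
    (hF : F ∈ S) (hFA : F ⊆ A) (hE' : E' ∈ S) (hE'A : E' ⊆ Aᶜ) :
    (G.leavingPairs A F).Nonempty := by
  obtain ⟨a, haF⟩ := (hS.1 F hF).1
  obtain ⟨b, hbE'⟩ := (hS.1 E' hE').1
  obtain ⟨p, hp, hp₁, -⟩ := exists_crossingPair_of_connected (hS.2 F hF E' hE').2
    (mem_union_left _ haF) (mem_union_right _ hbE') (hFA haF) (mem_compl.mp (hE'A hbE'))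
  exact ⟨p, mem_leavingPairs.mpr ⟨hp, (mem_union.mp hp₁).resolve_right fun h =>
    mem_compl.mp (hE'A h) (mem_crossingPairs.mp hp).1.1⟩⟩

lemma isHitting_of_minimal_leavingPairs {S : Finset (Finset V)} (hS : IsBramble G S)
    {A F₀ : Finset V} (hF₀ : F₀ ∈ S) (hF₀A : F₀ ⊆ A)
    (hmin : ∀ F ∈ S, F ⊆ A → #(G.leavingPairs A F₀) ≤ #(G.leavingPairs A F))
    {j : V × V} (hj : j ∈ G.leavingPairs A F₀) :
    IsHitting S (insert j.1 ((G.crossingPairs A \ G.leavingPairs A F₀).image Prod.fst ∪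
      (G.leavingPairs A F₀).image Prod.snd)) := by
  intro F hF
  by_cases hFA : F ⊆ A
  · by_cases hsub : G.leavingPairs A F ⊆ G.leavingPairs A F₀
    · have hj' : j ∈ G.leavingPairs A F := by
        rwa [eq_of_subset_of_card_le hsub (hmin F hF hFA)]
      exact ⟨j.1, mem_inter.mpr ⟨(mem_leavingPairs.mp hj').2, mem_insert_self _ _⟩⟩
    · obtain ⟨p, hp, hpN₀⟩ := not_subset.mp hsub
      obtain ⟨hpX, hp₁⟩ := mem_leavingPairs.mp hp
      exact ⟨p.1, mem_inter.mpr ⟨hp₁, mem_insert_of_mem (mem_union_left _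
        (mem_image_of_mem _ (mem_sdiff.mpr ⟨hpX, hpN₀⟩)))⟩⟩
  · obtain ⟨b, hbF, hbA⟩ := not_subset.mp hFA
    obtain ⟨a, haF₀⟩ := (hS.1 F₀ hF₀).1
    obtain ⟨p, hpX, hp₁, hp₂⟩ := exists_crossingPair_of_connected (hS.2 F₀ hF₀ F hF).2
      (mem_union_left _ haF₀) (mem_union_right _ hbF) (hF₀A haF₀) hbA
    have hpA := (mem_crossingPairs.mp hpX).1
    have hp₂F : p.2 ∈ F := (mem_union.mp hp₂).resolve_left fun h => hpA.2 (hF₀A h)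
    by_cases hpN₀ : p ∈ G.leavingPairs A F₀
    · exact ⟨p.2, mem_inter.mpr ⟨hp₂F, mem_insert_of_mem (mem_union_right _
        (mem_image_of_mem _ hpN₀))⟩⟩
    · have hp₁F : p.1 ∈ F :=
        (mem_union.mp hp₁).resolve_left fun h => hpN₀ (mem_leavingPairs.mpr ⟨hpX, h⟩)
      exact ⟨p.1, mem_inter.mpr ⟨hp₁F, mem_insert_of_mem (mem_union_left _
        (mem_image_of_mem _ (mem_sdiff.mpr ⟨hpX, hpN₀⟩)))⟩⟩

lemma exists_isHitting_card_le_crossingPairs {S : Finset (Finset V)} (hS : IsBramble G S)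
    {A E E' : Finset V} (hE : E ∈ S) (hEA : E ⊆ A) (hE' : E' ∈ S) (hE'A : E' ⊆ Aᶜ) :
    ∃ C, IsHitting S C ∧ #C ≤ #(G.crossingPairs A) + 1 := by
  obtain ⟨F₀, hF₀, hmin⟩ := exists_min_image {F ∈ S | F ⊆ A} (fun F => #(G.leavingPairs A F))
    ⟨E, mem_filter.mpr ⟨hE, hEA⟩⟩
  obtain ⟨hF₀S, hF₀A⟩ := mem_filter.mp hF₀
  obtain ⟨j, hj⟩ := leavingPairs_nonempty hS hF₀S hF₀A hE' hE'A
  refine ⟨_, isHitting_of_minimal_leavingPairs hS hF₀S hF₀A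
    (fun F hF hFA => hmin F (mem_filter.mpr ⟨hF, hFA⟩)) hj, ?_⟩
  have hN₀X : G.leavingPairs A F₀ ⊆ G.crossingPairs A := filter_subset _ _
  calc _ ≤ #((G.crossingPairs A \ G.leavingPairs A F₀).image Prod.fst ∪
          (G.leavingPairs A F₀).image Prod.snd) + 1 := card_insert_le _ _
    _ ≤ #(G.crossingPairs A \ G.leavingPairs A F₀) + #(G.leavingPairs A F₀) + 1 := by
        gcongr
        exact (card_union_le _ _).trans (add_le_add card_image_le card_image_le)
    _ = #(G.crossingPairs A) + 1 := by rw [card_sdiff_add_card_eq_card hN₀X]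

end Multigraph

open Multigraph in
theorem cut_ge_brambleOrder_sub_one_general {V : Type} [Fintype V] [DecidableEq V]
    (G : Multigraph V) (S : Finset (Finset V))
    (hS : IsBramble G S) (E E' : Finset V) (hE : E ∈ S) (hE' : E' ∈ S)
    (A : Finset V) (h1 : E ⊆ A) (h2 : E' ⊆ Aᶜ) :
    brambleOrder S - 1 ≤ G.cut A := by
  obtain ⟨C, hC, hcard⟩ := exists_isHitting_card_le_crossingPairs hS hE h1 hE' h2
  have horder := brambleOrder_le_card hC
  have hcut := card_crossingPairs_le_cut (G := G) A
  omega

open Multigraph in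
/-- If `B` is a bramble, `E, E' ∈ B`, and `A` satisfies `E ⊆ A`, `E' ⊆ Aᶜ`, then the
number of edges between `A` and `Aᶜ` is at least the order of `B` minus one. -/
theorem cut_ge_brambleOrder_sub_one {V : Type} [Fintype V] [DecidableEq V]
    (G : Multigraph V) (hG : G.Connected) (S : Finset (Finset V))
    (hS : IsBramble G S) (E E' : Finset V) (hE : E ∈ S) (hE' : E' ∈ S)
    (A : Finset V) (h1 : E ⊆ A) (h2 : E' ⊆ Aᶜ) :
    brambleOrder S - 1 ≤ G.cut A :=
  cut_ge_brambleOrder_sub_one_general G S hS E E' hE hE' A h1 h2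
end

section
/- If G' is a subdivision of a connected multigraph G, then sn(G') = sn(G). -/
namespace Multigraph

/-- The edge-subdivision of `G` at one edge between `v` and `w`: a new vertex
`none` is introduced in the middle of one of the edges between `v` and `w`. -/
def subdivideEdge {V : Type} [DecidableEq V] (G : Multigraph V) (v w : V) :
    Multigraph (Option V) where
  mul a b :=
    match a, b with
    | some a, some b => G.mul a b - (if s(a, b) = s(v, w) then 1 else 0)
    | none, some a => if a = v ∨ a = w then 1 else 0
    | some a, none => if a = v ∨ a = w then 1 else 0
    | none, none => 0
  symm := by
    rintro (_ | a) (_ | b)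
    · rfl
    · rfl
    · rfl
    · show G.mul a b - _ = G.mul b a - _
      rw [G.symm a b, Sym2.eq_swap]
  loopless := by
    rintro (_ | a)
    · rfl
    · show G.mul a a - _ = 0
      simp [G.loopless]

end Multigraph

/-- A multigraph bundled with its (finite, decidable) vertex type. -/
structure MG where
  V : Type
  [fin : Fintype V]
  [dec : DecidableEq V]
  G : Multigraph V

namespace MG

/-- The scramble number of a bundled multigraph. -/
noncomputable def sn (H : MG) : ℕ :=
  @Multigraph.scrambleNumber H.V H.fin H.dec H.G

/-- `H'` is obtained from `H` by a single edge-subdivision. -/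
def EdgeSubdiv (H H' : MG) : Prop :=
  letI := H.dec
  ∃ v w : H.V, H.G.Adj v w ∧
    ∃ e : H'.V ≃ Option H.V,
      ∀ a b : H'.V, H'.G.mul a b = (Multigraph.subdivideEdge H.G v w).mul (e a) (e b)

/-- `H'` is a subdivision of `H`: obtained by finitely many edge-subdivisions. -/
def IsSubdivision : MG → MG → Prop := Relation.ReflTransGen EdgeSubdiv

end MG

/-! Let `u` subdivide the edge `vw`. A scramble of `G` becomes one of the subdivision by adding
`u` to every egg containing both `v` and `w`; a scramble of the subdivision becomes one of `G` by
deleting `u` from every egg, the egg `{u}` being replaced by `{v}` and `{w}`. Neither operation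
lowers the order. Hitting sets transfer by sending `u` to `v`, or by reading a hitting set `C`
of `G` in the subdivision: if it misses an egg there, that egg is `{u}`, so `v, w ∈ C`, while the
egg `{u}`, of degree two, caps the order at two. A set `A` separating two eggs is matched with `A`
with or without `u`, whichever separates two eggs with at most as many crossing edges. The
delicate case is a set `A` separating `v` from `w` with no egg avoiding `u` on either side: then
all those eggs cross `A` along old edges, and `u` with the `A`-ends of these edges is a hitting
set of at most `cut A` vertices. -/

open Finset Function Relation

theorem Relation.ReflTransGen.exists_boundary_step {α : Type*} {r : α → α → Prop}
    {P : α → Prop} {a b : α} (h : ReflTransGen r a b) (ha : P a) (hb : ¬ P b) :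
    ∃ x y, r x y ∧ P x ∧ ¬ P y := by
  induction h with
  | refl => exact absurd ha hb
  | @tail c _ _ hcb ih =>
    by_cases hc : P c
    · exact ⟨c, _, hcb, hc, hb⟩
    · exact ih hc

namespace Finset

variable {α β : Type*}

theorem compl_map_equiv [Fintype α] [DecidableEq α] [Fintype β] [DecidableEq β] (e : α ≃ β)
    (A : Finset α) : (A.map e.toEmbedding)ᶜ = Aᶜ.map e.toEmbedding := by
  ext
  simp

theorem compl_map_some [Fintype α] [DecidableEq α] (A : Finset α) :
    (A.map Embedding.some)ᶜ = insertNone Aᶜ := by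
  ext (_ | a) <;> simp

theorem compl_insertNone [Fintype α] [DecidableEq α] (A : Finset α) :
    (insertNone A)ᶜ = Aᶜ.map Embedding.some := by
  ext (_ | a) <;> simp

theorem subset_map_some_of_subset_insertNone {E : Finset (Option α)} {B : Finset α}
    (hEB : E ⊆ insertNone B) (hn : none ∉ E) : E ⊆ B.map Embedding.some := by
  rintro (_ | a) ha
  exacts [absurd ha hn, by simpa using hEB ha]

end Finset

namespace Multigraph

section Connectivity

variable {V W : Type} {G : Multigraph V} {H : Multigraph W}

theorem Adj.ne {a b : V} (h : G.Adj a b) : a ≠ b := by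
  rintro rfl
  simp [Adj, G.loopless] at h

theorem Adj.symm {a b : V} (h : G.Adj a b) : G.Adj b a := by
  rwa [Adj, G.symm]

instance (G : Multigraph V) : DecidableRel G.Adj :=
  fun a b => inferInstanceAs (Decidable (0 < G.mul a b))

def StepIn (G : Multigraph V) (B : Finset V) (a b : V) : Prop :=
  a ∈ B ∧ b ∈ B ∧ G.Adj a b

theorem reflTransGen_stepIn_of_endpoints {v w : V} (hvw : G.Adj v w) {B : Finset V} {a b : V}
    (ha : a = v ∨ a = w) (hb : b = v ∨ b = w) (haB : a ∈ B) (hbB : b ∈ B) :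
    ReflTransGen (G.StepIn B) a b := by
  rcases ha with rfl | rfl <;> rcases hb with rfl | rfl
  exacts [.refl, .single ⟨haB, hbB, hvw⟩, .single ⟨haB, hbB, hvw.symm⟩, .refl]

theorem connSubset_iff {B : Finset V} :
    G.ConnSubset B ↔ B.Nonempty ∧ ∀ a ∈ B, ∀ b ∈ B, ReflTransGen (G.StepIn B) a b := by
  refine and_congr_right fun ⟨c, hc⟩ => ?_
  rw [SimpleGraph.connected_iff, and_iff_left ⟨⟨c, hc⟩⟩]
  constructor
  · intro hconn a ha b hb
    have h := (SimpleGraph.reachable_iff_reflTransGen _ _).1 (hconn ⟨a, ha⟩ ⟨b, hb⟩)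
    exact h.lift Subtype.val fun x y hxy => ⟨x.2, y.2, hxy⟩
  · rintro h ⟨a, ha⟩ ⟨b, hb⟩
    suffices ∀ b, ReflTransGen (G.StepIn B) a b →
        ∀ hb : b ∈ B, (G.simple.induce (B : Set V)).Reachable ⟨a, ha⟩ ⟨b, hb⟩ from
      this b (h a ha b hb) hb
    intro b hab
    induction hab with
    | refl => exact fun _ => .rfl
    | tail _ hstep ih => exact fun _ => (ih hstep.1).trans (SimpleGraph.Adj.reachable hstep.2.2)

theorem connSubset_singleton (x : V) : G.ConnSubset {x} := by
  refine connSubset_iff.2 ⟨singleton_nonempty x, fun a ha b hb => ?_⟩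
  rw [mem_singleton.1 ha, mem_singleton.1 hb]

theorem ConnSubset.exists_adj_of_mem_of_notMem {E A : Finset V} (hE : G.ConnSubset E)
    {a b : V} (ha : a ∈ E) (haA : a ∈ A) (hb : b ∈ E) (hbA : b ∉ A) :
    ∃ p ∈ E, ∃ q ∈ E, p ∈ A ∧ q ∉ A ∧ G.Adj p q := by
  obtain ⟨p, q, ⟨hp, hq, hpq⟩, hpA, hqA⟩ :=
    ((connSubset_iff.1 hE).2 a ha b hb).exists_boundary_step (P := (· ∈ A)) haA hbA
  exact ⟨p, hp, q, hq, hpA, hqA, hpq⟩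

theorem ConnSubset.of_map {B : Finset V} {B' : Finset W} (hB : G.ConnSubset B) (f : V → W)
    (hf : ∀ a ∈ B, f a ∈ B')
    (hadj : ∀ a ∈ B, ∀ b ∈ B, G.Adj a b → ReflTransGen (H.StepIn B') (f a) (f b))
    (hcover : ∀ b ∈ B', ∃ a ∈ B, ReflTransGen (H.StepIn B') (f a) b) :
    H.ConnSubset B' := by
  have : Std.Symm (H.StepIn B') := ⟨fun _ _ ⟨hx, hy, hxy⟩ => ⟨hy, hx, hxy.symm⟩⟩
  obtain ⟨⟨c, hc⟩, hconn⟩ := connSubset_iff.1 hB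
  refine connSubset_iff.2 ⟨⟨f c, hf c hc⟩, fun x hx y hy => ?_⟩
  obtain ⟨a, ha, hax⟩ := hcover x hx
  obtain ⟨b, hb, hby⟩ := hcover y hy
  have hab : ReflTransGen (H.StepIn B') (f a) (f b) :=
    (hconn a ha b hb).lift' f fun p q ⟨hp, hq, hpq⟩ => hadj p hp q hq hpq
  exact (Std.Symm.symm _ _ hax).trans (hab.trans hby)

theorem ConnSubset.map_equiv [DecidableEq W] (e : V ≃ W)
    (he : ∀ a b, H.mul (e a) (e b) = G.mul a b) {B : Finset V} (hB : G.ConnSubset B) :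
    H.ConnSubset (B.map e.toEmbedding) := by
  have hmap {a : V} (ha : a ∈ B) : e a ∈ B.map e.toEmbedding := mem_map_of_mem _ ha
  refine hB.of_map e (fun a => hmap) (fun a ha b hb hab => .single ⟨hmap ha, hmap hb, ?_⟩) ?_
  · rwa [Adj, he]
  · intro b hb
    obtain ⟨a, ha, rfl⟩ := mem_map.1 hb
    exact ⟨a, ha, .refl⟩

theorem card_filter_exists_adj_le (G : Multigraph V) (L R : Finset V) :
    #(L.filter fun a => ∃ b ∈ R, G.Adj a b) ≤ ∑ a ∈ L, ∑ b ∈ R, G.mul a b := by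
  calc #(L.filter fun a => ∃ b ∈ R, G.Adj a b)
      = ∑ a ∈ L.filter fun a => ∃ b ∈ R, G.Adj a b, 1 := card_eq_sum_ones _
    _ ≤ ∑ a ∈ L.filter fun a => ∃ b ∈ R, G.Adj a b, ∑ b ∈ R, G.mul a b := by
      refine sum_le_sum fun a ha => ?_
      obtain ⟨b, hb, hab⟩ := (mem_filter.1 ha).2
      exact hab.trans_le (single_le_sum (fun _ _ => Nat.zero_le _) hb)
    _ ≤ ∑ a ∈ L, ∑ b ∈ R, G.mul a b := sum_le_sum_of_subset (filter_subset _ _)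

theorem IsHitting.mem_of_singleton_mem [DecidableEq V] {S : Finset (Finset V)} {C : Finset V}
    (hC : IsHitting S C) {x : V} (hx : {x} ∈ S) : x ∈ C := by
  obtain ⟨y, hy⟩ := hC {x} hx
  rw [mem_inter, mem_singleton] at hy
  exact hy.1 ▸ hy.2

end Connectivity

section ScrambleOrder

variable {V W : Type} [Fintype V] [DecidableEq V] [Fintype W] [DecidableEq W]
  {G : Multigraph V} {H : Multigraph W} {S : Finset (Finset V)} {k : ℕ}

theorem validOrder_zero (G : Multigraph V) (S : Finset (Finset V)) : G.ValidOrder S 0 :=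
  ⟨fun _ _ => Nat.zero_le _, fun _ _ _ => Nat.zero_le _⟩

theorem ValidOrder.le_card (hS : G.IsScramble S) (hk : G.ValidOrder S k) :
    k ≤ Fintype.card V :=
  hk.1 univ fun E hE => by simpa using (hS E hE).1

theorem scrambleOrder_le_card (hS : G.IsScramble S) : G.scrambleOrder S ≤ Fintype.card V :=
  csSup_le ⟨0, validOrder_zero G S⟩ fun _ hk => hk.le_card hS

theorem scrambleOrder_le_scrambleNumber (hS : G.IsScramble S) :
    G.scrambleOrder S ≤ G.scrambleNumber := by
  refine le_csSup ⟨Fintype.card V, ?_⟩ ⟨S, hS, rfl⟩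
  rintro _ ⟨S', hS', rfl⟩
  exact scrambleOrder_le_card hS'

theorem scrambleNumber_le_of_transfer (T : Finset (Finset V) → Finset (Finset W))
    (hT : ∀ S, G.IsScramble S → H.IsScramble (T S))
    (hTk : ∀ S k, G.IsScramble S → G.ValidOrder S k → H.ValidOrder (T S) k) :
    G.scrambleNumber ≤ H.scrambleNumber := by
  refine csSup_le ⟨_, ∅, fun E hE => absurd hE (notMem_empty E), rfl⟩ ?_
  rintro _ ⟨S, hS, rfl⟩
  have hle : G.scrambleOrder S ≤ H.scrambleOrder (T S) :=
    csSup_le_csSup ⟨Fintype.card W, fun _ hk => hk.le_card (hT S hS)⟩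
      ⟨0, validOrder_zero G S⟩ fun k => hTk S k hS
  exact hle.trans (scrambleOrder_le_scrambleNumber (hT S hS))

theorem ValidOrder.le_max_one_cut_singleton (hk : G.ValidOrder S k) {x : V} (hx : {x} ∈ S) :
    k ≤ max 1 (G.cut {x}) := by
  by_cases hout : ∃ E ∈ S, x ∉ E
  · obtain ⟨E, hE, hxE⟩ := hout
    refine (hk.2 {x} ⟨_, hx, subset_rfl⟩ ⟨E, hE, fun y hy => ?_⟩).trans (le_max_right _ _)
    simpa using ne_of_mem_of_not_mem hy hxE
  · refine (hk.1 {x} fun E hE => ⟨x, ?_⟩).trans (by simp)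
    simpa using not_not.1 fun hxE => hout ⟨E, hE, hxE⟩

/-- `x` together with the `L`-ends of the `L`–`R` edges is a hitting set. -/
theorem ValidOrder.le_sum_mul_add_one (hS : G.IsScramble S) (hk : G.ValidOrder S k) (x : V)
    (L R : Finset V) (hcover : ∀ y, y ≠ x → y ∈ L ∨ y ∈ R)
    (hcross : ∀ E ∈ S, x ∉ E → ¬ E ⊆ L ∧ ¬ E ⊆ R) :
    k ≤ ∑ a ∈ L, ∑ b ∈ R, G.mul a b + 1 := by
  set D := L.filter fun a => ∃ b ∈ R, G.Adj a b
  have hhit : IsHitting S (insert x D) := by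
    intro E hE
    by_cases hxE : x ∈ E
    · exact ⟨x, mem_inter.2 ⟨hxE, mem_insert_self x D⟩⟩
    obtain ⟨hEL, hER⟩ := hcross E hE hxE
    obtain ⟨a, haE, haR⟩ := not_subset.1 hER
    obtain ⟨b, hbE, hbL⟩ := not_subset.1 hEL
    have haL := (hcover a (ne_of_mem_of_not_mem haE hxE)).resolve_right haR
    obtain ⟨p, hpE, q, hqE, hpL, hqL, hpq⟩ :=
      (hS E hE).exists_adj_of_mem_of_notMem haE haL hbE hbL
    have hqR := (hcover q (ne_of_mem_of_not_mem hqE hxE)).resolve_left hqL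
    exact ⟨p, mem_inter.2 ⟨hpE, mem_insert_of_mem (mem_filter.2 ⟨hpL, q, hqR, hpq⟩)⟩⟩
  calc k ≤ #(insert x D) := hk.1 _ hhit
    _ ≤ #D + 1 := card_insert_le x D
    _ ≤ _ := by gcongr; exact card_filter_exists_adj_le G L R

theorem cut_map_equiv (e : V ≃ W) (he : ∀ a b, H.mul (e a) (e b) = G.mul a b)
    (A : Finset V) : H.cut (A.map e.toEmbedding) = G.cut A := by
  simp [cut, compl_map_equiv, he]

theorem ValidOrder.map_equiv (e : V ≃ W) (he : ∀ a b, H.mul (e a) (e b) = G.mul a b)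
    (hk : G.ValidOrder S k) : H.ValidOrder (S.image (map e.toEmbedding)) k := by
  refine ⟨fun C hC => ?_, fun A ⟨_, hE₁', h₁⟩ ⟨_, hE₂', h₂⟩ => ?_⟩
  · refine (hk.1 (C.map e.symm.toEmbedding) fun E hE => ?_).trans (card_map _).le
    obtain ⟨_, hx⟩ := hC _ (mem_image_of_mem _ hE)
    obtain ⟨hxE, hxC⟩ := mem_inter.1 hx
    obtain ⟨a, ha, rfl⟩ := mem_map.1 hxE
    exact ⟨a, mem_inter.2 ⟨ha, by simpa using hxC⟩⟩
  · obtain ⟨E₁, hE₁, rfl⟩ := mem_image.1 hE₁'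
    obtain ⟨E₂, hE₂, rfl⟩ := mem_image.1 hE₂'
    have hsep := hk.2 (A.map e.symm.toEmbedding) ⟨E₁, hE₁, subset_map_symm.2 h₁⟩
      ⟨E₂, hE₂, by rw [compl_map_equiv]; exact subset_map_symm.2 h₂⟩
    simpa [← cut_map_equiv e he, Finset.map_map] using hsep

theorem scrambleNumber_le_of_equiv (e : V ≃ W) (he : ∀ a b, H.mul (e a) (e b) = G.mul a b) :
    G.scrambleNumber ≤ H.scrambleNumber := by
  refine scrambleNumber_le_of_transfer (fun S => S.image (map e.toEmbedding)) ?_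
    fun _ _ _ hk => hk.map_equiv e he
  intro S hS _ hE'
  obtain ⟨E, hE, rfl⟩ := mem_image.1 hE'
  exact (hS E hE).map_equiv e he

end ScrambleOrder

section SubdivideEdge

variable {V : Type} [DecidableEq V] {G : Multigraph V} {v w : V}

@[simp]
theorem subdivideEdge_mul_some_some (a b : V) :
    (G.subdivideEdge v w).mul (some a) (some b) =
      G.mul a b - if s(a, b) = s(v, w) then 1 else 0 := rfl

@[simp]
theorem subdivideEdge_mul_none_some (a : V) :
    (G.subdivideEdge v w).mul none (some a) = if a = v ∨ a = w then 1 else 0 := rfl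

@[simp]
theorem subdivideEdge_mul_some_none (a : V) :
    (G.subdivideEdge v w).mul (some a) none = if a = v ∨ a = w then 1 else 0 := rfl

@[simp]
theorem subdivideEdge_mul_none_none : (G.subdivideEdge v w).mul none none = 0 := rfl

theorem subdivideEdge_adj_none_some {a : V} :
    (G.subdivideEdge v w).Adj none (some a) ↔ a = v ∨ a = w := by
  by_cases h : a = v ∨ a = w <;> simp [Adj, h]

theorem subdivideEdge_adj_some_none {a : V} :
    (G.subdivideEdge v w).Adj (some a) none ↔ a = v ∨ a = w := by
  by_cases h : a = v ∨ a = w <;> simp [Adj, h]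

theorem not_subdivideEdge_adj_none_none : ¬ (G.subdivideEdge v w).Adj none none := by
  simp [Adj]

theorem Adj.of_subdivideEdge {a b : V} (h : (G.subdivideEdge v w).Adj (some a) (some b)) :
    G.Adj a b :=
  h.trans_le (Nat.sub_le _ _)

theorem Adj.subdivideEdge {a b : V} (h : G.Adj a b) (hab : s(a, b) ≠ s(v, w)) :
    (G.subdivideEdge v w).Adj (some a) (some b) := by
  simpa [Adj, hab] using h

theorem subdivideEdge_mul_some_some_add (hvw : G.Adj v w) (a b : V) :
    (G.subdivideEdge v w).mul (some a) (some b) +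
      ((if a = v ∧ b = w then 1 else 0) + if a = w ∧ b = v then 1 else 0) = G.mul a b := by
  by_cases h₁ : a = v ∧ b = w
  · obtain ⟨rfl, rfl⟩ := h₁
    have : 0 < G.mul a b := hvw
    simp [hvw.ne.symm]
    omega
  by_cases h₂ : a = w ∧ b = v
  · obtain ⟨rfl, rfl⟩ := h₂
    have : 0 < G.mul a b := hvw.symm
    simp [hvw.ne, Sym2.eq_swap]
    omega
  have : s(a, b) ≠ s(v, w) := fun h => (Sym2.eq_iff.1 h).elim h₁ h₂
  simp [h₁, h₂, this]

theorem subdivideEdge_mul_none_some_eq (hvw : G.Adj v w) (a : V) :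
    (G.subdivideEdge v w).mul none (some a) =
      (if a = v then 1 else 0) + if a = w then 1 else 0 := by
  by_cases ha : a = v
  · simp [ha, hvw.ne]
  · simp [ha]

variable [Fintype V]

theorem sum_subdivideEdge_mul_add_ite (hvw : G.Adj v w) (A : Finset V) :
    (∑ a ∈ A, ∑ b ∈ Aᶜ, (G.subdivideEdge v w).mul (some a) (some b)) +
      (if (v ∈ A ↔ w ∈ A) then 0 else 1) = G.cut A := by
  have hsep : ∑ a ∈ A, ∑ b ∈ Aᶜ,
      ((if a = v ∧ b = w then 1 else 0) + if a = w ∧ b = v then 1 else 0) =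
      if (v ∈ A ↔ w ∈ A) then 0 else 1 := by
    simp only [sum_add_distrib, ite_and]
    by_cases hv : v ∈ A <;> by_cases hw : w ∈ A <;> simp [hv, hw]
  rw [← hsep, cut, ← sum_add_distrib]
  refine sum_congr rfl fun a _ => ?_
  rw [← sum_add_distrib]
  exact sum_congr rfl fun b _ => subdivideEdge_mul_some_some_add hvw a b

theorem cut_subdivideEdge_map_some (hvw : G.Adj v w) (A : Finset V) :
    (G.subdivideEdge v w).cut (A.map Embedding.some) =
      (if v ∈ A then 1 else 0) + (if w ∈ A then 1 else 0) +
        ∑ a ∈ A, ∑ b ∈ Aᶜ, (G.subdivideEdge v w).mul (some a) (some b) := by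
  simp only [cut, compl_map_some, sum_map, sum_insertNone, sum_add_distrib, Embedding.some_apply,
    (G.subdivideEdge v w).symm _ none, subdivideEdge_mul_none_some_eq hvw, sum_ite_eq']

theorem cut_subdivideEdge_insertNone (hvw : G.Adj v w) (A : Finset V) :
    (G.subdivideEdge v w).cut (insertNone A) =
      (if v ∈ A then 0 else 1) + (if w ∈ A then 0 else 1) +
        ∑ a ∈ A, ∑ b ∈ Aᶜ, (G.subdivideEdge v w).mul (some a) (some b) := by
  simp only [cut, compl_insertNone, sum_map, sum_insertNone, sum_add_distrib,
    Embedding.some_apply, subdivideEdge_mul_none_some_eq hvw, sum_ite_eq', mem_compl]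
  split_ifs <;> rfl

theorem cut_eraseNone_le_cut_subdivideEdge (hvw : G.Adj v w) (A' : Finset (Option V)) :
    G.cut A'.eraseNone ≤ (G.subdivideEdge v w).cut A' := by
  set A := A'.eraseNone
  have hA := sum_subdivideEdge_mul_add_ite hvw A
  by_cases hn : none ∈ A'
  · have : A' = insertNone A := by simp [A, insert_eq_of_mem hn]
    rw [this, cut_subdivideEdge_insertNone hvw]
    by_cases hv : v ∈ A <;> by_cases hw : w ∈ A <;> simp [hv, hw] at hA ⊢ <;> omega
  · have : A' = A.map Embedding.some := by simp [A, erase_eq_of_notMem hn]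
    rw [this, cut_subdivideEdge_map_some hvw]
    by_cases hv : v ∈ A <;> by_cases hw : w ∈ A <;> simp [hv, hw] at hA ⊢ <;> omega

theorem cut_subdivideEdge_map_some_le (hvw : G.Adj v w) {A : Finset V} (h : v ∉ A ∨ w ∉ A) :
    (G.subdivideEdge v w).cut (A.map Embedding.some) ≤ G.cut A := by
  have hA := sum_subdivideEdge_mul_add_ite hvw A
  rw [cut_subdivideEdge_map_some hvw]
  by_cases hv : v ∈ A <;> by_cases hw : w ∈ A <;> simp_all <;> omega

theorem cut_subdivideEdge_insertNone_le (hvw : G.Adj v w) {A : Finset V} (h : v ∈ A ∨ w ∈ A) :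
    (G.subdivideEdge v w).cut (insertNone A) ≤ G.cut A := by
  have hA := sum_subdivideEdge_mul_add_ite hvw A
  rw [cut_subdivideEdge_insertNone hvw]
  by_cases hv : v ∈ A <;> by_cases hw : w ∈ A <;> simp_all <;> omega

theorem cut_subdivideEdge_singleton_none (hvw : G.Adj v w) :
    (G.subdivideEdge v w).cut {none} = 2 := by
  have : insertNone (∅ : Finset V) = {none} := rfl
  simpa [this] using cut_subdivideEdge_insertNone hvw ∅

end SubdivideEdge

section Forward

variable {V : Type} [DecidableEq V] {G : Multigraph V} {v w : V}

def subdivideEgg (v w : V) (E : Finset V) : Finset (Option V) :=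
  if v ∈ E ∧ w ∈ E then insertNone E else E.map Embedding.some

@[simp]
theorem some_mem_subdivideEgg {E : Finset V} {a : V} :
    some a ∈ subdivideEgg v w E ↔ a ∈ E := by
  unfold subdivideEgg
  split_ifs <;> simp

@[simp]
theorem none_mem_subdivideEgg {E : Finset V} :
    none ∈ subdivideEgg v w E ↔ v ∈ E ∧ w ∈ E := by
  unfold subdivideEgg
  split_ifs <;> simp_all

theorem ConnSubset.subdivideEgg (hvw : G.Adj v w) {E : Finset V} (hE : G.ConnSubset E) :
    (G.subdivideEdge v w).ConnSubset (subdivideEgg v w E) := by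
  refine hE.of_map some (fun a ha => by simpa using ha) (fun a ha b hb hab => ?_) ?_
  · by_cases hvw' : s(a, b) = s(v, w)
    · have hnone : v ∈ E ∧ w ∈ E := by
        rcases Sym2.eq_iff.1 hvw' with ⟨rfl, rfl⟩ | ⟨rfl, rfl⟩
        exacts [⟨ha, hb⟩, ⟨hb, ha⟩]
      have hab' : (a = v ∨ a = w) ∧ (b = v ∨ b = w) := by
        rcases Sym2.eq_iff.1 hvw' with ⟨rfl, rfl⟩ | ⟨rfl, rfl⟩ <;> simp
      have hnone' : none ∈ Multigraph.subdivideEgg v w E := by simpa using hnone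
      exact .head ⟨by simpa using ha, hnone', subdivideEdge_adj_some_none.2 hab'.1⟩
        (.single ⟨hnone', by simpa using hb, subdivideEdge_adj_none_some.2 hab'.2⟩)
    · exact .single ⟨by simpa using ha, by simpa using hb, hab.subdivideEdge hvw'⟩
  · rintro (_ | a) h
    · have hnone := none_mem_subdivideEgg.1 h
      exact ⟨v, hnone.1,
        .single ⟨by simpa using hnone.1, h, subdivideEdge_adj_some_none.2 (.inl rfl)⟩⟩
    · exact ⟨a, some_mem_subdivideEgg.1 h, .refl⟩

variable [Fintype V]

theorem ValidOrder.image_subdivideEgg (hvw : G.Adj v w) {S : Finset (Finset V)} {k : ℕ}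
    (hk : G.ValidOrder S k) :
    (G.subdivideEdge v w).ValidOrder (S.image (subdivideEgg v w)) k := by
  refine ⟨fun C' hC' => ?_, fun A' ⟨_, hE₁', h₁⟩ ⟨_, hE₂', h₂⟩ => ?_⟩
  · refine (hk.1 (C'.image fun o => o.getD v) fun E hE => ?_).trans card_image_le
    obtain ⟨x, hx⟩ := hC' _ (mem_image_of_mem _ hE)
    obtain ⟨hxE, hxC⟩ := mem_inter.1 hx
    refine ⟨x.getD v, mem_inter.2 ⟨?_, mem_image_of_mem _ hxC⟩⟩
    cases x with
    | none => exact (none_mem_subdivideEgg.1 hxE).1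
    | some a => exact some_mem_subdivideEgg.1 hxE
  · obtain ⟨E₁, hE₁, rfl⟩ := mem_image.1 hE₁'
    obtain ⟨E₂, hE₂, rfl⟩ := mem_image.1 hE₂'
    refine le_trans ?_ (cut_eraseNone_le_cut_subdivideEdge hvw A')
    refine hk.2 A'.eraseNone ⟨E₁, hE₁, fun a ha => ?_⟩ ⟨E₂, hE₂, fun a ha => ?_⟩
    · exact mem_eraseNone.2 (h₁ (some_mem_subdivideEgg.2 ha))
    · simpa using mem_compl.1 (h₂ (some_mem_subdivideEgg.2 ha))

theorem scrambleNumber_le_scrambleNumber_subdivideEdge (hvw : G.Adj v w) :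
    G.scrambleNumber ≤ (G.subdivideEdge v w).scrambleNumber := by
  refine scrambleNumber_le_of_transfer (fun S => S.image (subdivideEgg v w)) ?_
    fun _ _ _ hk => hk.image_subdivideEgg hvw
  intro S hS _ hE'
  obtain ⟨E, hE, rfl⟩ := mem_image.1 hE'
  exact (hS E hE).subdivideEgg hvw

end Forward

section Backward

variable {V : Type} [DecidableEq V] {G : Multigraph V} {v w : V}

theorem ConnSubset.some_mem_of_none_mem {E' : Finset (Option V)}
    (hE' : (G.subdivideEdge v w).ConnSubset E') (hn : none ∈ E') (hne : E' ≠ {none}) :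
    some v ∈ E' ∨ some w ∈ E' := by
  obtain ⟨t, ht, htn⟩ : ∃ t ∈ E', t ∉ ({none} : Finset (Option V)) := by
    by_contra! h
    exact hne (eq_singleton_iff_unique_mem.2 ⟨hn, fun x hx => mem_singleton.1 (h x hx)⟩)
  obtain ⟨p, -, q, hq, hp, hqn, hpq⟩ :=
    hE'.exists_adj_of_mem_of_notMem hn (mem_singleton_self none) ht htn
  obtain rfl := mem_singleton.1 hp
  cases q with
  | none => exact absurd (mem_singleton_self none) hqn
  | some c => rcases subdivideEdge_adj_none_some.1 hpq with rfl | rfl <;> simp [hq]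

/-- Contract the edge from the new vertex to an endpoint `c` of the subdivided edge lying in
`E'` (if any). -/
theorem ConnSubset.eraseNone (hvw : G.Adj v w) {E' : Finset (Option V)}
    (hE' : (G.subdivideEdge v w).ConnSubset E') (hne : E' ≠ {none}) :
    G.ConnSubset E'.eraseNone := by
  set c := if some v ∈ E' then v else w
  have hc : c = v ∨ c = w := by by_cases h : some v ∈ E' <;> simp [c, h]
  have hcE : none ∈ E' → c ∈ E'.eraseNone := fun hn => by
    rcases hE'.some_mem_of_none_mem hn hne with h | h <;> by_cases h' : some v ∈ E' <;>
      simp_all [c]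
  have hf : ∀ x ∈ E', x.getD c ∈ E'.eraseNone := by
    rintro (_ | a) hx
    exacts [hcE hx, mem_eraseNone.2 hx]
  refine hE'.of_map (fun x => x.getD c) hf (fun x hx y hy hxy => ?_)
    fun b hb => ⟨some b, mem_eraseNone.1 hb, .refl⟩
  cases x with
  | none =>
    cases y with
    | none => exact absurd hxy not_subdivideEdge_adj_none_none
    | some b =>
      exact reflTransGen_stepIn_of_endpoints hvw hc (subdivideEdge_adj_none_some.1 hxy)
        (hf _ hx) (hf _ hy)
  | some a =>
    cases y with
    | none =>
      exact reflTransGen_stepIn_of_endpoints hvw (subdivideEdge_adj_some_none.1 hxy) hc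
        (hf _ hx) (hf _ hy)
    | some b => exact .single ⟨hf _ hx, hf _ hy, hxy.of_subdivideEdge⟩

def contractEgg (v w : V) (E' : Finset (Option V)) : Finset (Finset V) :=
  if E' = {none} then {{v}, {w}} else {E'.eraseNone}

theorem connSubset_of_mem_contractEgg (hvw : G.Adj v w) {E' : Finset (Option V)}
    {F : Finset V} (hE' : (G.subdivideEdge v w).ConnSubset E') (hF : F ∈ contractEgg v w E') :
    G.ConnSubset F := by
  unfold contractEgg at hF
  split_ifs at hF with h
  · rcases mem_insert.1 hF with rfl | hF
    exacts [connSubset_singleton v, mem_singleton.1 hF ▸ connSubset_singleton w]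
  · exact mem_singleton.1 hF ▸ hE'.eraseNone hvw h

theorem subset_insertNone_of_mem_contractEgg {E' : Finset (Option V)} {F B : Finset V}
    (hF : F ∈ contractEgg v w E') (hFB : F ⊆ B) : E' ⊆ insertNone B := by
  unfold contractEgg at hF
  split_ifs at hF with h
  · simp [h]
  · rintro (_ | a) ha
    · simp
    · simpa using hFB (mem_singleton.1 hF ▸ mem_eraseNone.2 ha)

theorem endpoint_mem_of_mem_contractEgg {E' : Finset (Option V)} {F : Finset V}
    (hE' : (G.subdivideEdge v w).ConnSubset E') (hF : F ∈ contractEgg v w E')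
    (hn : none ∈ E') : v ∈ F ∨ w ∈ F := by
  unfold contractEgg at hF
  split_ifs at hF with h
  · rcases mem_insert.1 hF with rfl | hF
    · simp
    · simp [mem_singleton.1 hF]
  · rw [mem_singleton.1 hF]
    simpa using hE'.some_mem_of_none_mem hn h

variable [Fintype V] {S' : Finset (Finset (Option V))} {k : ℕ}

theorem ValidOrder.le_card_of_isHitting_contractEgg (hvw : G.Adj v w)
    (hk : (G.subdivideEdge v w).ValidOrder S' k) {C : Finset V}
    (hC : IsHitting (S'.biUnion (contractEgg v w)) C) : k ≤ #C := by
  by_cases hhit : IsHitting S' (C.map Embedding.some)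
  · exact (hk.1 _ hhit).trans (card_map _).le
  obtain ⟨E₀, hE₀, hE₀C⟩ :
      ∃ E₀ ∈ S', ¬ (E₀ ∩ C.map Embedding.some).Nonempty := by
    simpa [IsHitting] using hhit
  have h₀ : E₀ = {none} := by
    by_contra h
    obtain ⟨a, ha⟩ :=
      hC E₀.eraseNone (mem_biUnion.2 ⟨E₀, hE₀, by simp [contractEgg, h]⟩)
    exact hE₀C ⟨some a, by simpa using ha⟩
  have hmem {x : V} (hx : x = v ∨ x = w) : {x} ∈ S'.biUnion (contractEgg v w) :=
    mem_biUnion.2 ⟨E₀, hE₀, by rcases hx with rfl | rfl <;> simp [contractEgg, h₀]⟩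
  have hvw_C : {v, w} ⊆ C := by
    simp [insert_subset_iff, hC.mem_of_singleton_mem (hmem (.inl rfl)),
      hC.mem_of_singleton_mem (hmem (.inr rfl))]
  calc k ≤ max 1 ((G.subdivideEdge v w).cut {none}) :=
        hk.le_max_one_cut_singleton (h₀ ▸ hE₀)
    _ = #{v, w} := by rw [cut_subdivideEdge_singleton_none hvw, card_pair hvw.ne]; rfl
    _ ≤ #C := card_le_card hvw_C

theorem ValidOrder.le_cut_of_contractEgg (hvw : G.Adj v w)
    (hS' : (G.subdivideEdge v w).IsScramble S') (hk : (G.subdivideEdge v w).ValidOrder S' k)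
    {A : Finset V} (h₁ : ∃ F ∈ S'.biUnion (contractEgg v w), F ⊆ A)
    (h₂ : ∃ F ∈ S'.biUnion (contractEgg v w), F ⊆ Aᶜ) : k ≤ G.cut A := by
  obtain ⟨F₁, hF₁', hF₁A⟩ := h₁
  obtain ⟨F₂, hF₂', hF₂A⟩ := h₂
  obtain ⟨E₁, hE₁, hF₁⟩ := mem_biUnion.1 hF₁'
  obtain ⟨E₂, hE₂, hF₂⟩ := mem_biUnion.1 hF₂'
  have hE₁A : E₁ ⊆ insertNone A := subset_insertNone_of_mem_contractEgg hF₁ hF₁A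
  have hE₂A : E₂ ⊆ insertNone Aᶜ := subset_insertNone_of_mem_contractEgg hF₂ hF₂A
  have hwithout {E} (hE : E ∈ S') (hEA : E ⊆ A.map Embedding.some) (h : v ∉ A ∨ w ∉ A) :
      k ≤ G.cut A :=
    (hk.2 _ ⟨E, hE, hEA⟩ ⟨E₂, hE₂, by rwa [compl_map_some]⟩).trans
      (cut_subdivideEdge_map_some_le hvw h)
  have hwith {E} (hE : E ∈ S') (hEA : E ⊆ Aᶜ.map Embedding.some) (h : v ∈ A ∨ w ∈ A) :
      k ≤ G.cut A :=
    (hk.2 _ ⟨E₁, hE₁, hE₁A⟩ ⟨E, hE, by rwa [compl_insertNone]⟩).trans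
      (cut_subdivideEdge_insertNone_le hvw h)
  by_cases hsep : v ∈ A ↔ w ∈ A
  · by_cases hvA : v ∈ A
    · refine hwith hE₂ (subset_map_some_of_subset_insertNone hE₂A fun hn => ?_) (.inl hvA)
      rcases endpoint_mem_of_mem_contractEgg (hS' E₂ hE₂) hF₂ hn with h | h
      exacts [mem_compl.1 (hF₂A h) hvA, mem_compl.1 (hF₂A h) (hsep.1 hvA)]
    · refine hwithout hE₁ (subset_map_some_of_subset_insertNone hE₁A fun hn => ?_) (.inl hvA)
      rcases endpoint_mem_of_mem_contractEgg (hS' E₁ hE₁) hF₁ hn with h | h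
      exacts [hvA (hF₁A h), hvA (hsep.2 (hF₁A h))]
  by_cases h₀ : ∃ E ∈ S', E ⊆ A.map Embedding.some
  · obtain ⟨E, hE, hEA⟩ := h₀
    exact hwithout hE hEA (by tauto)
  by_cases h₁ : ∃ E ∈ S', E ⊆ Aᶜ.map Embedding.some
  · obtain ⟨E, hE, hEA⟩ := h₁
    exact hwith hE hEA (by tauto)
  have hcross := hk.le_sum_mul_add_one hS' none (A.map Embedding.some) (Aᶜ.map Embedding.some)
    (by rintro (_ | a) h; exacts [absurd rfl h, by simp [em]])
    fun E hE _ => ⟨fun h => h₀ ⟨E, hE, h⟩, fun h => h₁ ⟨E, hE, h⟩⟩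
  have hA := sum_subdivideEdge_mul_add_ite hvw A
  rw [if_neg hsep] at hA
  simp only [sum_map, Embedding.some_apply] at hcross
  omega

theorem scrambleNumber_subdivideEdge_le (hvw : G.Adj v w) :
    (G.subdivideEdge v w).scrambleNumber ≤ G.scrambleNumber := by
  refine scrambleNumber_le_of_transfer (fun S' => S'.biUnion (contractEgg v w)) ?_
    fun _ _ hS' hk => ⟨fun _ => hk.le_card_of_isHitting_contractEgg hvw,
      fun _ => hk.le_cut_of_contractEgg hvw hS'⟩
  intro S' hS' F hF
  obtain ⟨E', hE', hF⟩ := mem_biUnion.1 hF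
  exact connSubset_of_mem_contractEgg hvw (hS' E' hE') hF

end Backward

end Multigraph

theorem MG.sn_eq_of_edgeSubdiv {H H' : MG} (h : MG.EdgeSubdiv H H') : H'.sn = H.sn := by
  cases H with | mk V G => ?_
  cases H' with | mk V' G' => ?_
  obtain ⟨v, w, hvw, e, he⟩ := h
  show G'.scrambleNumber = G.scrambleNumber
  have hsub := le_antisymm (Multigraph.scrambleNumber_subdivideEdge_le hvw)
    (Multigraph.scrambleNumber_le_scrambleNumber_subdivideEdge hvw)
  rw [← hsub]
  exact le_antisymm (Multigraph.scrambleNumber_le_of_equiv e fun a b => (he a b).symm)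
    (Multigraph.scrambleNumber_le_of_equiv e.symm fun a b => by
      simpa using he (e.symm a) (e.symm b))

theorem sn_subdivision_general (H H' : MG)
    (h : MG.IsSubdivision H H') : H'.sn = H.sn := by
  induction h with
  | refl => rfl
  | tail _ hstep ih => rw [MG.sn_eq_of_edgeSubdiv hstep, ih]

/-- The scramble number is invariant under subdivision. -/
theorem sn_subdivision (H H' : MG) (hc : H.G.Connected)
    (h : MG.IsSubdivision H H') : H'.sn = H.sn :=
  sn_subdivision_general H H' h
end
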